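/- Let T be a binary tree. If the body [T] is a perfect subset of ℕ → Bool, then [w(T)] is a perfect subset of ℕ → ℕ. Moreover, if T is a perfect tree, then w(T) is a perfect tree. -/
import Mathlib


/-- A tree (over an alphabet `α`) is a nonempty set of finite sequences closed under
taking prefixes. -/
def IsTree {α : Type*} (T : Set (List α)) : Prop :=
  T.Nonempty ∧ ∀ σ ∈ T, ∀ τ : List α, τ <+: σ → τ ∈ T

/-- The body of a tree: the set of infinite sequences all of whose finite initial
segments belong to `T`. -/
def body {α : Type*} (T : Set (List α)) : Set (ℕ → α) :=
  {f | ∀ n : ℕ, List.ofFn (fun i : Fin n => f i) ∈ T}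

/-- Two finite sequences are incomparable if neither is a prefix of the other. -/
def Incomp {α : Type*} (σ τ : List α) : Prop :=
  ¬σ <+: τ ∧ ¬τ <+: σ

/-- A tree is perfect if every element has two incomparable proper extensions in the tree. -/
def PerfectTree {α : Type*} (T : Set (List α)) : Prop :=
  ∀ σ ∈ T, ∃ τ ∈ T, ∃ τ' ∈ T,
    (σ <+: τ ∧ σ ≠ τ) ∧ (σ <+: τ' ∧ σ ≠ τ') ∧ Incomp τ τ'

/-- The translation of a finite sequence `σ = ⟨σ 0, …, σ (n-1)⟩ ∈ List ℕ` to the binary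
sequence `0^{σ 0} 1 0^{σ 1} 1 ⋯ 0^{σ (n-1)} 1 ∈ List Bool`. -/
def vList : List ℕ → List Bool
  | [] => []
  | n :: σ => List.replicate n false ++ true :: vList σ


lemma vList_append (σ τ : List ℕ) : vList (σ ++ τ) = vList σ ++ vList τ := by
  induction σ with
  | nil => simp [vList]
  | cons n σ ih => simp [vList, ih]

lemma length_vList_ge (σ : List ℕ) : σ.length ≤ (vList σ).length := by
  induction σ with
  | nil => simp [vList]
  | cons n σ ih => simp [vList]; omega

lemma vList_prefix_mono {σ σ' : List ℕ} (h : σ <+: σ') : vList σ <+: vList σ' := by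
  obtain ⟨r, rfl⟩ := h
  rw [vList_append]; exact List.prefix_append _ _

lemma rep_true_prefix : ∀ (n n' : ℕ) (l l' : List Bool),
    (List.replicate n false ++ true :: l) <+: (List.replicate n' false ++ true :: l') →
    n = n' ∧ l <+: l' := by
  intro n
  induction n with
  | zero =>
    intro n' l l' h
    cases n' with
    | zero => exact ⟨rfl, by simpa using h⟩
    | succ m => simp [List.replicate_succ, List.cons_prefix_cons] at h
  | succ m ih =>
    intro n' l l' h
    cases n' with
    | zero => simp [List.replicate_succ, List.cons_prefix_cons] at h
    | succ m' =>
      simp only [List.replicate_succ, List.cons_append, List.cons_prefix_cons] at h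
      obtain ⟨-, h⟩ := h
      obtain ⟨h1, h2⟩ := ih m' l l' h
      exact ⟨by omega, h2⟩

lemma vList_prefix_reflect : ∀ {σ σ' : List ℕ}, vList σ <+: vList σ' → σ <+: σ' := by
  intro σ
  induction σ with
  | nil => intro σ' _; exact List.nil_prefix
  | cons n σ ih =>
    intro σ' h
    cases σ' with
    | nil =>
      exfalso
      have := h.length_le
      simp [vList] at this
    | cons n' σ₂ =>
      obtain ⟨rfl, h2⟩ := rep_true_prefix n n' _ _ h
      exact List.cons_prefix_cons.mpr ⟨rfl, ih h2⟩

lemma exists_vList (ρ : List Bool) : ∃ σ : List ℕ, vList σ = ρ ++ [true] := by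
  induction ρ with
  | nil => exact ⟨[0], by simp [vList]⟩
  | cons b ρ ih =>
    obtain ⟨σ, hσ⟩ := ih
    cases b with
    | true => exact ⟨0 :: σ, by simp [vList, hσ]⟩
    | false =>
      cases σ with
      | nil => simp [vList] at hσ
      | cons m σ₂ =>
        refine ⟨(m+1) :: σ₂, ?_⟩
        simp only [vList, List.replicate_succ, List.cons_append] at hσ ⊢
        rw [hσ]

/-- restriction of an infinite sequence to the list of its first `n` values -/
def restr {α : Type*} (f : ℕ → α) (n : ℕ) : List α := List.ofFn fun i : Fin n => f i

@[simp] lemma length_restr {α : Type*} (f : ℕ → α) (n : ℕ) : (restr f n).length = n := by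
  simp [restr]

@[simp] lemma getElem_restr {α : Type*} (f : ℕ → α) (n i : ℕ) (h : i < (restr f n).length) :
    (restr f n)[i] = f i := by
  simp [restr, List.getElem_ofFn]

lemma restr_prefix {α : Type*} (f : ℕ → α) {M N : ℕ} (h : M ≤ N) :
    restr f M <+: restr f N := by
  rw [List.prefix_iff_eq_take]
  apply List.ext_getElem
  · simp [h, Nat.min_eq_left]
  · intro i h1 h2
    rw [List.getElem_take]
    simp

lemma mem_body_iff {α : Type*} (T : Set (List α)) (f : ℕ → α) :
    f ∈ body T ↔ ∀ n, restr f n ∈ T := Iff.rfl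

/-- `ρ` is an initial segment of `z` -/
def IsPref {α : Type*} (ρ : List α) (z : ℕ → α) : Prop :=
  ∀ i (h : i < ρ.length), ρ[i] = z i

lemma mem_of_isPref {α : Type*} {T : Set (List α)} {ρ : List α} {z : ℕ → α}
    (h : IsPref ρ z) (hz : z ∈ body T) : ρ ∈ T := by
  have : ρ = restr z ρ.length := by
    apply List.ext_getElem
    · simp
    · intro i h1 h2
      rw [getElem_restr]
      exact h i h1
  rw [this]; exact hz _

/-- the infinite translation of a Baire sequence to a Cantor sequence -/
def Vinf (x : ℕ → ℕ) : ℕ → Bool := fun k => (vList (restr x (k+1))).getD k false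

lemma vinf_lt (x : ℕ → ℕ) (N k : ℕ) (h : k < (vList (restr x N)).length) :
    (vList (restr x N))[k] = Vinf x k := by
  have hk1 : k < (vList (restr x (k+1))).length :=
    lt_of_lt_of_le (Nat.lt_succ_self k) (by simpa using length_vList_ge (restr x (k+1)))
  unfold Vinf
  rw [List.getD_eq_getElem _ _ hk1]
  rcases le_total (k+1) N with hle | hle
  · exact ((vList_prefix_mono (restr_prefix x hle)).getElem hk1).symm
  · exact (vList_prefix_mono (restr_prefix x hle)).getElem h

lemma isPref_vinf (x : ℕ → ℕ) (N : ℕ) : IsPref (vList (restr x N)) (Vinf x) :=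
  fun k h => vinf_lt x N k h

lemma vinf_mem_body {T : Set (List Bool)} (hT : IsTree T) {x : ℕ → ℕ}
    (hx : x ∈ body {σ : List ℕ | vList σ ∈ T}) : Vinf x ∈ body T := by
  intro N
  have hρ : vList (restr x N) ∈ T := hx N
  have hlen : N ≤ (vList (restr x N)).length := by
    simpa using length_vList_ge (restr x N)
  have : (List.ofFn fun i : Fin N => Vinf x i) = (vList (restr x N)).take N := by
    apply List.ext_getElem
    · simp [hlen, Nat.min_eq_left]
    · intro i h1 h2
      rw [List.getElem_take, List.getElem_ofFn, vinf_lt x N i (by simp at h2; omega)]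
  rw [this]
  exact hT.2 _ hρ _ (List.take_prefix _ _)


lemma prefix_of_agree {α : Type*} {l₁ l₂ : List α} (hle : l₁.length ≤ l₂.length)
    (h : ∀ k (h₁ : k < l₁.length) (h₂ : k < l₂.length), l₁[k] = l₂[k]) : l₁ <+: l₂ := by
  rw [List.prefix_iff_eq_take]
  apply List.ext_getElem
  · simp [hle, Nat.min_eq_left]
  · intro i h1 h2
    rw [List.getElem_take]
    exact h i h1 (by omega)

lemma exists_diff_of_incomp {α : Type*} {ρ l₁ l₂ : List α}
    (pre1 : ρ <+: l₁) (pre2 : ρ <+: l₂) (h : Incomp l₁ l₂) :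
    ∃ k, ρ.length ≤ k ∧ ∃ (h₁ : k < l₁.length) (h₂ : k < l₂.length), l₁[k] ≠ l₂[k] := by
  have key : ∀ (a b : List α), a.length ≤ b.length → ¬ a <+: b →
      ∃ k, ∃ (h₁ : k < a.length) (h₂ : k < b.length), a[k] ≠ b[k] := by
    intro a b hle hnp
    by_contra hc
    push_neg at hc
    exact hnp (prefix_of_agree hle hc)
  have main : ∃ k, ∃ (h₁ : k < l₁.length) (h₂ : k < l₂.length), l₁[k] ≠ l₂[k] := by
    rcases le_total l₁.length l₂.length with hle | hle
    · exact key l₁ l₂ hle h.1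
    · obtain ⟨k, h₂, h₁, hne⟩ := key l₂ l₁ hle h.2
      exact ⟨k, h₁, h₂, fun e => hne e.symm⟩
  obtain ⟨k, h₁, h₂, hne⟩ := main
  refine ⟨k, ?_, h₁, h₂, hne⟩
  by_contra hk
  push_neg at hk
  exact hne ((pre1.getElem (by omega)).symm.trans (pre2.getElem (by omega)))

lemma true_extension {T : Set (List Bool)} (hPT : PerfectTree T) {ρ : List Bool} (hρ : ρ ∈ T) :
    ∃ τ ∈ T, ρ <+: τ ∧ ∃ k, ρ.length ≤ k ∧ ∃ h : k < τ.length, τ[k] = true := by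
  obtain ⟨τ, hτ, τ', hτ', ⟨pre1, -⟩, ⟨pre2, -⟩, hinc⟩ := hPT ρ hρ
  obtain ⟨k, hk, h₁, h₂, hne⟩ := exists_diff_of_incomp pre1 pre2 hinc
  cases hb : τ[k] with
  | true => exact ⟨τ, hτ, pre1, k, hk, h₁, hb⟩
  | false =>
    refine ⟨τ', hτ', pre2, k, hk, h₂, ?_⟩
    rw [hb] at hne
    cases hb' : τ'[k] with
    | true => rfl
    | false => rw [hb'] at hne; exact absurd rfl hne

lemma take_succ_true {l : List Bool} {k : ℕ} (h : k < l.length) (ht : l[k] = true) :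
    ∃ σ : List ℕ, vList σ = l.take (k+1) := by
  obtain ⟨σ, hσ⟩ := exists_vList (l.take k)
  refine ⟨σ, ?_⟩
  rw [hσ, List.take_succ, List.getElem?_eq_getElem h, ht]
  rfl

lemma part2aux {T : Set (List Bool)} (hT : IsTree T) (hPT : PerfectTree T)
    {σ : List ℕ} {τ τ' : List Bool} (hτ : τ ∈ T) (hτ' : τ' ∈ T)
    (pre : vList σ <+: τ) (pre' : vList σ <+: τ') {k : ℕ} (hk : (vList σ).length ≤ k)
    (h₁ : k < τ.length) (h₂ : k < τ'.length) (ht : τ[k] = true) (hf : τ'[k] = false) :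
    ∃ σ₁ ∈ {σ : List ℕ | vList σ ∈ T}, ∃ σ₂ ∈ {σ : List ℕ | vList σ ∈ T},
      (σ <+: σ₁ ∧ σ ≠ σ₁) ∧ (σ <+: σ₂ ∧ σ ≠ σ₂) ∧ Incomp σ₁ σ₂ := by
  obtain ⟨σ₁, hσ₁⟩ := take_succ_true h₁ ht
  obtain ⟨τ'', hτ'', pre'', k₂, hk₂, h₃, ht''⟩ := true_extension hPT hτ'
  obtain ⟨σ₂, hσ₂⟩ := take_succ_true h₃ ht''
  have hk₂' : k < k₂ := by omega
  have len1 : (vList σ₁).length = k + 1 := by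
    rw [hσ₁]; simp; omega
  have len2 : (vList σ₂).length = k₂ + 1 := by
    rw [hσ₂]; simp; omega
  have m1 : vList σ₁ ∈ T := by
    rw [hσ₁]; exact hT.2 _ hτ _ (List.take_prefix _ _)
  have m2 : vList σ₂ ∈ T := by
    rw [hσ₂]; exact hT.2 _ hτ'' _ (List.take_prefix _ _)
  have p1 : vList σ <+: vList σ₁ := by
    rw [hσ₁, List.prefix_take_iff]; exact ⟨pre, by omega⟩
  have p2 : vList σ <+: vList σ₂ := by
    rw [hσ₂, List.prefix_take_iff]
    exact ⟨pre'.trans pre'', by omega⟩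
  have e1 : (vList σ₁).getD k false = true := by
    rw [hσ₁, List.getD_eq_getElem _ _ (by simp; omega), List.getElem_take]
    exact ht
  have e2 : (vList σ₂).getD k false = false := by
    rw [hσ₂, List.getD_eq_getElem _ _ (by simp; omega), List.getElem_take,
      ← pre''.getElem h₂]
    exact hf
  refine ⟨σ₁, m1, σ₂, m2, ⟨?_, ?_⟩, ⟨?_, ?_⟩, ?_, ?_⟩
  · exact vList_prefix_reflect p1
  · intro e; rw [e] at hk; omega
  · exact vList_prefix_reflect p2
  · intro e; rw [e] at hk; omega
  · intro hp
    have vp := vList_prefix_mono hp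
    have : (vList σ₁).getD k false = (vList σ₂).getD k false := by
      rw [List.getD_eq_getElem _ _ (by omega), List.getD_eq_getElem _ _ (by omega)]
      exact vp.getElem _
    rw [e1, e2] at this; exact Bool.noConfusion this
  · intro hp
    have := (vList_prefix_mono hp).length_le
    omega

section Top
variable {α : Type*} [TopologicalSpace α] [DiscreteTopology α]

lemma cylinder_open (x : ℕ → α) (n : ℕ) : IsOpen {y : ℕ → α | ∀ i < n, y i = x i} := by
  have : {y : ℕ → α | ∀ i < n, y i = x i} =
      ⋂ i ∈ Finset.range n, (fun y : ℕ → α => y i) ⁻¹' {x i} := by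
    ext y; simp
  rw [this]
  exact isOpen_biInter_finset fun i _ => (continuous_apply i).isOpen_preimage _ (isOpen_discrete _)

lemma body_closed (T : Set (List α)) : IsClosed (body T) := by
  have : body T = ⋂ n : ℕ, (fun f (i : Fin n) => f i) ⁻¹' {g : Fin n → α | List.ofFn g ∈ T} := by
    ext f; simp [body]
  rw [this]
  refine isClosed_iInter fun n => IsClosed.preimage ?_ (isClosed_discrete _)
  exact continuous_pi (fun i : Fin n => continuous_apply (i : ℕ))

lemma cylinder_mem_nhds (x : ℕ → α) {U : Set (ℕ → α)} (hU : U ∈ nhds x) :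
    ∃ n : ℕ, {y : ℕ → α | ∀ i < n, y i = x i} ⊆ U := by
  rw [nhds_pi, Filter.mem_pi] at hU
  obtain ⟨I, hI, t, ht, hsub⟩ := hU
  obtain ⟨F, hF⟩ : ∃ F : Finset ℕ, I ⊆ ↑F := hI.exists_finset_coe.imp fun F h => h.symm.le
  refine ⟨(F.sup id) + 1, fun y hy => hsub fun i hi => ?_⟩
  have hix : y i = x i := hy i (by
    have := Finset.le_sup (f := id) (hF hi)
    simpa using Nat.lt_succ_of_le this)
  rw [hix]
  have := ht i
  rwa [nhds_discrete, Filter.mem_pure] at this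

end Top

lemma part2 {T : Set (List Bool)} (hT : IsTree T) (hPT : PerfectTree T) :
    PerfectTree {σ : List ℕ | vList σ ∈ T} := by
  intro σ hσ
  obtain ⟨τ, hτ, τ', hτ', ⟨pre1, -⟩, ⟨pre2, -⟩, hinc⟩ := hPT (vList σ) hσ
  obtain ⟨k, hk, h₁, h₂, hne⟩ := exists_diff_of_incomp pre1 pre2 hinc
  cases hb : τ[k] with
  | true =>
    have hb' : τ'[k] = false := by
      cases hb2 : τ'[k]
      · rfl
      · rw [hb, hb2] at hne; exact absurd rfl hne
    exact part2aux hT hPT hτ hτ' pre1 pre2 hk h₁ h₂ hb hb'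
  | false =>
    have hb' : τ'[k] = true := by
      cases hb2 : τ'[k]
      · rw [hb, hb2] at hne; exact absurd rfl hne
      · rfl
    obtain ⟨σ₁, m1, σ₂, m2, e1, e2, i12⟩ :=
      part2aux hT hPT hτ' hτ pre2 pre1 hk h₂ h₁ hb' hb
    exact ⟨σ₂, m2, σ₁, m1, e2, e1, i12.2, i12.1⟩

/-- step lemma: near any point of a preperfect body there is a point of the body with
a late `true`. -/
lemma exists_true_step {T : Set (List Bool)} (hP : Preperfect (body T)) {z : ℕ → Bool}
    (hz : z ∈ body T) (l : ℕ) :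
    ∃ z' ∈ body T, (∀ i < l, z' i = z i) ∧ ∃ k, l ≤ k ∧ z' k = true := by
  have hacc := hP z hz
  rw [accPt_iff_nhds] at hacc
  obtain ⟨y, ⟨hyU, hyT⟩, hyne⟩ := hacc {y : ℕ → Bool | ∀ i < l, y i = z i}
    ((cylinder_open z l).mem_nhds (fun i _ => rfl))
  obtain ⟨k, hk⟩ := Function.ne_iff.mp hyne
  have hkl : l ≤ k := by
    by_contra hlt
    exact hk (hyU k (by omega))
  cases hzk : z k with
  | true => exact ⟨z, hz, fun _ _ => rfl, k, hkl, hzk⟩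
  | false =>
    refine ⟨y, hyT, hyU, k, hkl, ?_⟩
    cases hyk : y k with
    | true => rfl
    | false => rw [hyk, hzk] at hk; exact absurd rfl hk
lemma part1acc {T : Set (List Bool)} (hT : IsTree T) (hP : Preperfect (body T)) :
    Preperfect (body {σ : List ℕ | vList σ ∈ T}) := by
  intro x hx
  rw [accPt_iff_nhds]
  intro U hU
  obtain ⟨n, hcyl⟩ := cylinder_mem_nhds x hU
  set L := (vList (restr x n)).length with hL
  have hVx : Vinf x ∈ body T := vinf_mem_body hT hx
  have hacc := hP (Vinf x) hVx
  rw [accPt_iff_nhds] at hacc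
  obtain ⟨y, ⟨hyc, hyT⟩, hyne⟩ := hacc {z : ℕ → Bool | ∀ i < L, z i = Vinf x i}
    ((cylinder_open _ L).mem_nhds (fun i _ => rfl))
  obtain ⟨kk, hkk⟩ := Function.ne_iff.mp hyne
  set Inv : List ℕ × (ℕ → Bool) → Prop :=
    fun p => p.2 ∈ body T ∧ IsPref (vList p.1) p.2 ∧ p.2 kk = y kk with hInv
  have step : ∀ p : {p // Inv p}, ∃ q : {q // Inv q}, ∃ a, q.1.1 = p.1.1 ++ [a] := by
    rintro ⟨⟨σ, z⟩, hzT, hiz, hzk⟩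
    obtain ⟨z', hz'T, hagree, k, hkl, hk'⟩ :=
      exists_true_step hP hzT (max (vList σ).length (kk+1))
    have hex : ∃ j, z' ((vList σ).length + j) = true := by
      refine ⟨k - (vList σ).length, ?_⟩
      have hlk : (vList σ).length ≤ k := le_trans (le_max_left _ _) hkl
      rw [Nat.add_sub_cancel' hlk]; exact hk'
    have hfa : z' ((vList σ).length + Nat.find hex) = true := Nat.find_spec hex
    have hmin : ∀ j < Nat.find hex, z' ((vList σ).length + j) = false := by
      intro j hj
      have := Nat.find_min hex hj
      simp at this; exact this
    refine ⟨⟨(σ ++ [Nat.find hex], z'), hz'T, ?_, ?_⟩, Nat.find hex, rfl⟩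
    · show IsPref (vList (σ ++ [Nat.find hex])) z'
      rw [vList_append]
      intro i hi
      rcases lt_or_ge i (vList σ).length with hil | hil
      · rw [List.getElem_append_left hil, hiz i hil,
          ← hagree i (lt_of_lt_of_le hil (le_max_left _ _))]
      · rw [List.getElem_append_right hil]
        have hlen2 : (vList [Nat.find hex]).length = Nat.find hex + 1 := by simp [vList]
        have hj : i - (vList σ).length < Nat.find hex + 1 := by
          rw [List.length_append, hlen2] at hi; omega
        show (vList [Nat.find hex])[i - (vList σ).length]'(by omega) = z' i
        have hvl : vList [Nat.find hex] = List.replicate (Nat.find hex) false ++ [true] := by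
          simp [vList]
        rw [List.getElem_of_eq hvl (by omega)]
        rcases lt_or_ge (i - (vList σ).length) (Nat.find hex) with hja | hja
        · rw [List.getElem_append_left (by simpa using hja), List.getElem_replicate]
          have := hmin _ hja
          rw [Nat.add_sub_cancel' hil] at this
          exact this.symm
        · have hje : i - (vList σ).length = Nat.find hex := by omega
          rw [List.getElem_append_right (by simpa using hja)]
          simp only [hje, List.length_replicate, Nat.sub_self, List.getElem_singleton]
          have hieq : i = (vList σ).length + Nat.find hex := by omega
          rw [hieq]
          exact hfa.symm
    · rw [← hzk]
      exact hagree kk (lt_of_lt_of_le (Nat.lt_succ_self kk) (le_max_right _ _))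
  -- the initial state
  have hy0 : IsPref (vList (restr x n)) y := by
    intro i hi
    rw [(isPref_vinf x n) i hi]
    exact (hyc i hi).symm
  have hInv0 : Inv (restr x n, y) := ⟨hyT, hy0, rfl⟩
  -- the chain
  let f : {p // Inv p} → {p // Inv p} := fun p => (step p).choose
  have hf : ∀ p : {p // Inv p}, ∃ a, (f p).1.1 = p.1.1 ++ [a] := fun p => (step p).choose_spec
  let chain : ℕ → {p // Inv p} := fun m => f^[m] ⟨(restr x n, y), hInv0⟩
  have hchain_succ : ∀ m, chain (m+1) = f (chain m) := fun m =>
    Function.iterate_succ_apply' f m _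
  have hlen : ∀ m, (chain m).1.1.length = n + m := by
    intro m
    induction m with
    | zero => simp [chain]
    | succ m ih =>
      obtain ⟨a, ha⟩ := hf (chain m)
      rw [hchain_succ m, ha, List.length_append, ih]
      simp
      omega
  have hpre : ∀ m m', m ≤ m' → (chain m).1.1 <+: (chain m').1.1 := by
    intro m m' hm
    induction m', hm using Nat.le_induction with
    | base => exact List.prefix_refl _
    | succ m' hm ih =>
      obtain ⟨a, ha⟩ := hf (chain m')
      rw [hchain_succ m', ha]
      exact ih.trans (List.prefix_append _ _)
  set x' : ℕ → ℕ := fun j => (chain (j+1)).1.1.getD j 0 with hx'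
  have hx'get : ∀ j m (h : j < (chain m).1.1.length), x' j = (chain m).1.1[j] := by
    intro j m h
    have hj1 : j < (chain (j+1)).1.1.length := by rw [hlen]; omega
    rw [hx']
    simp only
    rw [List.getD_eq_getElem _ _ hj1]
    rcases le_total (j+1) m with hle | hle
    · exact (hpre _ _ hle).getElem hj1
    · exact ((hpre _ _ hle).getElem h).symm
  have key : ∀ m, (chain m).1.1 = restr x' (n+m) := by
    intro m
    apply List.ext_getElem
    · rw [hlen]; simp
    · intro j h1 h2
      rw [getElem_restr]
      exact (hx'get j m h1).symm
  have hmem : x' ∈ body {σ : List ℕ | vList σ ∈ T} := by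
    intro M
    have h1 : restr x' M <+: restr x' (n+M) := restr_prefix x' (by omega)
    have h2 : vList (restr x' M) <+: vList (restr x' (n+M)) := vList_prefix_mono h1
    rw [← key M] at h2
    have h3 : vList (chain M).1.1 ∈ T :=
      mem_of_isPref (chain M).2.2.1 (chain M).2.1
    exact hT.2 _ h3 _ h2
  have hagr : ∀ i < n, x' i = x i := by
    intro i hi
    have h0 : i < (chain 0).1.1.length := by rw [hlen]; omega
    rw [hx'get i 0 h0]
    exact getElem_restr x n i (by simpa using hi)
  have hne : x' ≠ x := by
    intro he
    set M := kk + 1 with hM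
    have hkL : kk < (vList (chain M).1.1).length := by
      have := length_vList_ge (chain M).1.1
      rw [hlen] at this
      omega
    have e1 : (vList (chain M).1.1)[kk] = y kk := by
      rw [(chain M).2.2.1 kk hkL]
      exact (chain M).2.2.2
    have e2 : (vList (chain M).1.1)[kk] = Vinf x kk := by
      have h' : (chain M).1.1 = restr x (n + M) := by rw [key M, he]
      have hv := congrArg vList h'
      rw [List.getElem_of_eq hv hkL]
      exact vinf_lt x (n + M) kk (by rw [← hv]; exact hkL)
    exact hkk (e1 ▸ e2)
  refine ⟨x', ⟨hcyl (fun i hi => hagr i hi), hmem⟩, hne⟩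

/-- Let `T` be a binary tree and `w T = {σ : List ℕ | v σ ∈ T}` its translation to a tree
on `ℕ`. If `[T]` is a perfect subset of Cantor space, then `[w T]` is a perfect subset of
Baire space; and if `T` is a perfect tree, then `w T` is a perfect tree. -/
theorem baireTranslation_perfect {T : Set (List Bool)} (hT : IsTree T) :
    (Perfect (body T) → Perfect (body {σ : List ℕ | vList σ ∈ T})) ∧
    (PerfectTree T → PerfectTree {σ : List ℕ | vList σ ∈ T}) := by
  constructor
  · intro hPerf
    exact ⟨body_closed _, part1acc hT hPerf.acc⟩
  · exact part2 hT
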